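/- arXiv:0807.3753 — 8 statements merged into one kernel-verified Lean document; each statement's English description precedes it below -/
import Mathlib

section
/- Let A be a 1-periodic Z-algebra, i.e. there is an isomorphism φ: A → A(1) of Z-algebras (where A(1)_{ij} = A_{i+1,j+1}). Then there exists a Z-graded ring B with B_n = A_{0,n} and multiplication b_i · b_j = b_i φ^i(b_j), and the map ψ: B̌ → A defined on B̌_{ij} = B_{j-i} = A_{0,j-i} by ψ = φ^i is an isomorphism of Z-algebras. In particular, every 1-periodic Z-algebra is of the form B̌ for a Z-graded ring B. -/
/-!
An isomorphism `f : A ≅ A(n)` is a permutation of the disjoint union `⨆ A_{ij}` that carries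
`A_{ij}` onto `A_{i+n,j+n}` compatibly with addition, multiplication and the local units, and such
permutations are closed under composition and inversion. So the powers of the permutation
defined by `φ : A ≅ A(1)` are again isomorphisms `φ^k : A ≅ A(k)`, and the cocycle identity
`φ^(m+n) = φ^m ∘ φ^n` is just `zpow_add`. That identity is what makes `b · b' = b φ^i(b')`
associative and `ψ = φ^i : B̌_{ij} = A_{0,j-i} → A_{ij}` multiplicative. Elements of components
whose indices agree only propositionally are compared in the disjoint union, which turns
dependent casts into plain equalities.
-/

/-- A ℤ-algebra: a (non-unital) ring `A = ⊕_{i,j ∈ ℤ} A_{ij}` with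
`A_{ij}·A_{jk} ⊆ A_{ik}`, `A_{ij}·A_{kl} = 0` for `j ≠ k`, and local units `e_i ∈ A_{ii}`,
presented by its components. -/
structure ZAlg where
  C : ℤ → ℤ → Type
  addgrp : ∀ i j, AddCommGroup (C i j)
  mul : ∀ {i j l : ℤ}, C i j → C j l → C i l
  e : ∀ i : ℤ, C i i
  mul_add : ∀ {i j l : ℤ} (a : C i j) (b c : C j l), mul a (b + c) = mul a b + mul a c
  add_mul : ∀ {i j l : ℤ} (a b : C i j) (c : C j l), mul (a + b) c = mul a c + mul b c
  mul_assoc : ∀ {i j l m : ℤ} (a : C i j) (b : C j l) (c : C l m),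
    mul (mul a b) c = mul a (mul b c)
  e_mul : ∀ {i j : ℤ} (a : C i j), mul (e i) a = a
  mul_e : ∀ {i j : ℤ} (a : C i j), mul a (e j) = a

attribute [instance] ZAlg.addgrp

/-- The shift `A(g)` of a ℤ-algebra, `A(g)_{ij} = A_{i+g, j+g}`. -/
def ZAlg.shift (A : ZAlg) (g : ℤ) : ZAlg where
  C i j := A.C (i + g) (j + g)
  addgrp _ _ := A.addgrp _ _
  mul a b := A.mul a b
  e i := A.e (i + g)
  mul_add a b c := A.mul_add a b c
  add_mul a b c := A.add_mul a b c
  mul_assoc a b c := A.mul_assoc a b c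
  e_mul a := A.e_mul a
  mul_e a := A.mul_e a

/-- An isomorphism of ℤ-algebras. -/
structure ZAlgIso (A B : ZAlg) where
  toEquiv : ∀ i j : ℤ, A.C i j ≃+ B.C i j
  map_mul : ∀ {i j l : ℤ} (a : A.C i j) (b : A.C j l),
    toEquiv i l (A.mul a b) = B.mul (toEquiv i j a) (toEquiv j l b)
  map_e : ∀ i : ℤ, toEquiv i i (A.e i) = B.e i

/-- A ℤ-graded ring, presented by its components; the coherence laws are stated with
`HEq` to avoid transports along `(i+j)+l = i+(j+l)` etc. -/
structure GrRingData where
  C : ℤ → Type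
  addgrp : ∀ i, AddCommGroup (C i)
  mul : ∀ {i j : ℤ}, C i → C j → C (i + j)
  one : C 0
  mul_add : ∀ {i j : ℤ} (a : C i) (b c : C j), mul a (b + c) = mul a b + mul a c
  add_mul : ∀ {i j : ℤ} (a b : C i) (c : C j), mul (a + b) c = mul a c + mul b c
  mul_assoc : ∀ {i j l : ℤ} (a : C i) (b : C j) (c : C l),
    HEq (mul (mul a b) c) (mul a (mul b c))
  one_mul : ∀ {i : ℤ} (a : C i), HEq (mul one a) a
  mul_one : ∀ {i : ℤ} (a : C i), HEq (mul a one) a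

attribute [instance] GrRingData.addgrp

namespace GrRingData

variable (B : GrRingData)

private theorem cast_add {m n : ℤ} (h : m = n) (x y : B.C m) :
    cast (congrArg B.C h) (x + y) = cast (congrArg B.C h) x + cast (congrArg B.C h) y := by
  subst h; rfl

private theorem heq_mul_left {m m' n : ℤ} (h : m = m') (x : B.C m) (y : B.C n) :
    HEq (B.mul (cast (congrArg B.C h) x) y) (B.mul x y) := by subst h; rfl

private theorem heq_mul_right {m n n' : ℤ} (h : n = n') (x : B.C m) (y : B.C n) :
    HEq (B.mul x (cast (congrArg B.C h) y)) (B.mul x y) := by subst h; rfl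

/-- The ℤ-algebra `B̌` associated to a ℤ-graded ring `B`: `B̌_{ij} = B_{j-i}`. -/
def check (B : GrRingData) : ZAlg where
  C i j := B.C (j - i)
  addgrp _ _ := B.addgrp _
  mul {i j l} a b := cast (congrArg B.C (show (j - i) + (l - j) = l - i by ring)) (B.mul a b)
  e i := cast (congrArg B.C (show (0 : ℤ) = i - i by ring)) B.one
  mul_add a b c := by
    beta_reduce
    rw [B.mul_add, B.cast_add]
    omega
  add_mul a b c := by
    beta_reduce
    rw [B.add_mul, B.cast_add]
    omega
  mul_assoc {i j l m} a b c := by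
    beta_reduce
    have h1 := B.heq_mul_left (show (j - i) + (l - j) = l - i by ring) (B.mul a b) c
    have h2 := B.heq_mul_right (show (l - j) + (m - l) = m - j by ring) a (B.mul b c)
    exact eq_of_heq (((cast_heq _ _).trans h1).trans
      ((B.mul_assoc a b c).trans (h2.symm.trans (cast_heq _ _).symm)))
  e_mul {i j} a := by
    beta_reduce
    exact eq_of_heq ((cast_heq _ _).trans
      ((B.heq_mul_left (show (0 : ℤ) = i - i by ring) B.one a).trans (B.one_mul a)))
  mul_e {i j} a := by
    beta_reduce
    exact eq_of_heq ((cast_heq _ _).trans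
      ((B.heq_mul_right (show (0 : ℤ) = j - j by ring) a B.one).trans (B.mul_one a)))

end GrRingData

-- Lets `rw` and `simp` see `(A.shift n).C i j` as `A.C (i + n) (j + n)`.
attribute [reducible] ZAlg.shift

namespace ZAlg

variable (A : ZAlg)

abbrev Total : Type := Σ p : ℤ × ℤ, A.C p.1 p.2

variable {A}

def toTotal {i j : ℤ} (a : A.C i j) : A.Total := ⟨(i, j), a⟩

theorem toTotal_eq_toTotal_iff {i j i' j' : ℤ} {a : A.C i j} {a' : A.C i' j'} :
    A.toTotal a = A.toTotal a' ↔ i = i' ∧ j = j' ∧ a ≍ a' :=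
  Sigma.mk.inj_iff.trans (by rw [Prod.mk_inj, and_assoc])

theorem heq_of_toTotal_eq_toTotal {i j i' j' : ℤ} {a : A.C i j} {a' : A.C i' j'}
    (h : A.toTotal a = A.toTotal a') : a ≍ a' :=
  (toTotal_eq_toTotal_iff.1 h).2.2

theorem toTotal_injective {i j : ℤ} : Function.Injective (A.toTotal : A.C i j → A.Total) :=
  fun _ _ h => eq_of_heq (heq_of_toTotal_eq_toTotal h)

theorem toTotal_mul_congr {i j l i' j' l' : ℤ} {a : A.C i j} {b : A.C j l} {a' : A.C i' j'}
    {b' : A.C j' l'} (ha : A.toTotal a = A.toTotal a') (hb : A.toTotal b = A.toTotal b') :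
    A.toTotal (A.mul a b) = A.toTotal (A.mul a' b') := by
  obtain ⟨rfl, rfl, ha⟩ := toTotal_eq_toTotal_iff.1 ha
  obtain ⟨-, rfl, hb⟩ := toTotal_eq_toTotal_iff.1 hb
  rw [eq_of_heq ha, eq_of_heq hb]

theorem toTotal_e_congr {i i' : ℤ} (h : i = i') : A.toTotal (A.e i) = A.toTotal (A.e i') := by
  subst h; rfl

variable (A)

def castAddEquiv {i j i' j' : ℤ} (hi : i = i') (hj : j = j') : A.C i j ≃+ A.C i' j' := by
  subst hi hj; exact AddEquiv.refl _

variable {A}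

theorem toTotal_castAddEquiv {i j i' j' : ℤ} (hi : i = i') (hj : j = j') (a : A.C i j) :
    A.toTotal (A.castAddEquiv hi hj a) = A.toTotal a := by
  subst hi hj; rfl

theorem castAddEquiv_mul {i j l i' j' l' : ℤ} (hi : i = i') (hj : j = j') (hl : l = l')
    (a : A.C i j) (b : A.C j l) :
    A.castAddEquiv hi hl (A.mul a b) = A.mul (A.castAddEquiv hi hj a) (A.castAddEquiv hj hl b) := by
  subst hi hj hl; rfl

theorem castAddEquiv_e {i i' : ℤ} (h h' : i = i') : A.castAddEquiv h h' (A.e i) = A.e i' := by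
  subst h; rfl

end ZAlg

namespace ZAlgIso

variable {A : ZAlg} {n m : ℤ}

def shiftZero (A : ZAlg) : ZAlgIso A (A.shift 0) where
  toEquiv i j := A.castAddEquiv (add_zero i).symm (add_zero j).symm
  map_mul a b := A.castAddEquiv_mul _ _ _ a b
  map_e _ := A.castAddEquiv_e _ _

/-- The composite `A ≅ A(n) ≅ A(n)(m) = A(n + m)`; on `A_{ij}` it is `g ∘ f`. -/
def shiftTrans (f : ZAlgIso A (A.shift n)) (g : ZAlgIso A (A.shift m)) :
    ZAlgIso A (A.shift (n + m)) where
  toEquiv i j := ((f.toEquiv i j).trans (g.toEquiv (i + n) (j + n))).trans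
    (A.castAddEquiv (add_assoc i n m) (add_assoc j n m))
  map_mul a b := by
    simp only [AddEquiv.trans_apply, f.map_mul, g.map_mul]
    exact A.castAddEquiv_mul _ _ _ _ _
  map_e i := by
    simp only [AddEquiv.trans_apply, f.map_e, g.map_e]
    exact A.castAddEquiv_e _ _

def shiftInv (f : ZAlgIso A (A.shift n)) : ZAlgIso A (A.shift (-n)) where
  toEquiv i j := (A.castAddEquiv (neg_add_cancel_right i n).symm
    (neg_add_cancel_right j n).symm).trans (f.toEquiv (i + -n) (j + -n)).symm
  map_mul a b := by
    apply (f.toEquiv _ _).injective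
    simp only [AddEquiv.trans_apply, f.map_mul, AddEquiv.apply_symm_apply]
    exact A.castAddEquiv_mul _ _ _ _ _
  map_e i := by
    apply (f.toEquiv _ _).injective
    simp only [AddEquiv.trans_apply, f.map_e, AddEquiv.apply_symm_apply]
    exact A.castAddEquiv_e _ _

theorem toTotal_apply_congr (f : ZAlgIso A (A.shift n)) {i j i' j' : ℤ} {a : A.C i j}
    {a' : A.C i' j'} (h : A.toTotal a = A.toTotal a') :
    A.toTotal (f.toEquiv i j a) = A.toTotal (f.toEquiv i' j' a') := by
  obtain ⟨rfl, rfl, h⟩ := ZAlg.toTotal_eq_toTotal_iff.1 h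
  rw [eq_of_heq h]

theorem toTotal_symm_apply_congr (f : ZAlgIso A (A.shift n)) {i j i' j' : ℤ}
    {b : A.C (i + n) (j + n)} {b' : A.C (i' + n) (j' + n)} (h : A.toTotal b = A.toTotal b') :
    A.toTotal ((f.toEquiv i j).symm b) = A.toTotal ((f.toEquiv i' j').symm b') := by
  obtain ⟨hi, hj, h⟩ := ZAlg.toTotal_eq_toTotal_iff.1 h
  obtain rfl : i = i' := add_right_cancel hi
  obtain rfl : j = j' := add_right_cancel hj
  rw [eq_of_heq h]

theorem toTotal_shiftInv_apply (f : ZAlgIso A (A.shift n)) {i j : ℤ} (a : A.C i j) :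
    A.toTotal (f.shiftInv.toEquiv (i + n) (j + n) (f.toEquiv i j a)) = A.toTotal a := by
  calc A.toTotal (f.shiftInv.toEquiv (i + n) (j + n) (f.toEquiv i j a))
      = A.toTotal ((f.toEquiv i j).symm (f.toEquiv i j a)) :=
        f.toTotal_symm_apply_congr (ZAlg.toTotal_castAddEquiv _ _ _)
    _ = A.toTotal a := by rw [AddEquiv.symm_apply_apply]

theorem toTotal_apply_shiftInv (f : ZAlgIso A (A.shift n)) {i j : ℤ} (b : A.C i j) :
    A.toTotal (f.toEquiv (i + -n) (j + -n) (f.shiftInv.toEquiv i j b)) = A.toTotal b := by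
  show A.toTotal (f.toEquiv _ _ ((f.toEquiv _ _).symm (A.castAddEquiv _ _ b))) = _
  rw [AddEquiv.apply_symm_apply, ZAlg.toTotal_castAddEquiv]

def toPerm (f : ZAlgIso A (A.shift n)) : Equiv.Perm A.Total where
  toFun x := A.toTotal (f.toEquiv x.1.1 x.1.2 x.2)
  invFun x := A.toTotal (f.shiftInv.toEquiv x.1.1 x.1.2 x.2)
  left_inv := fun ⟨_, a⟩ => f.toTotal_shiftInv_apply a
  right_inv := fun ⟨_, b⟩ => f.toTotal_apply_shiftInv b

theorem toPerm_shiftZero (A : ZAlg) : (shiftZero A).toPerm = 1 :=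
  Equiv.ext fun ⟨_, a⟩ => ZAlg.toTotal_castAddEquiv _ _ a

theorem toPerm_shiftTrans (f : ZAlgIso A (A.shift n)) (g : ZAlgIso A (A.shift m)) :
    (f.shiftTrans g).toPerm = g.toPerm * f.toPerm :=
  Equiv.ext fun ⟨_, _⟩ => ZAlg.toTotal_castAddEquiv _ _ _

theorem toPerm_shiftInv (f : ZAlgIso A (A.shift n)) : f.shiftInv.toPerm = f.toPerm⁻¹ :=
  Equiv.ext fun _ => rfl

variable (φ : ZAlgIso A (A.shift 1))

theorem exists_toPerm_eq_zpow (k : ℤ) : ∃ f : ZAlgIso A (A.shift k), f.toPerm = φ.toPerm ^ k := by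
  induction k using Int.induction_on with
  | zero => exact ⟨shiftZero A, by rw [zpow_zero, toPerm_shiftZero]⟩
  | succ k ih =>
    obtain ⟨f, hf⟩ := ih
    exact ⟨f.shiftTrans φ, by rw [toPerm_shiftTrans, hf, mul_self_zpow]⟩
  | pred k ih =>
    obtain ⟨f, hf⟩ := ih
    rw [← neg_add_eq_sub]
    exact ⟨φ.shiftInv.shiftTrans f, by
      rw [toPerm_shiftTrans, toPerm_shiftInv, hf, neg_add_eq_sub, zpow_sub_one]⟩

noncomputable def zpow (k : ℤ) : ZAlgIso A (A.shift k) := (φ.exists_toPerm_eq_zpow k).choose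

theorem toTotal_zpow (k : ℤ) {i j : ℤ} (a : A.C i j) :
    A.toTotal ((φ.zpow k).toEquiv i j a) = (φ.toPerm ^ k) (A.toTotal a) := by
  rw [← (φ.exists_toPerm_eq_zpow k).choose_spec]
  rfl

theorem toTotal_zpow_add (m n : ℤ) {i j : ℤ} (a : A.C i j) :
    A.toTotal ((φ.zpow (m + n)).toEquiv i j a) =
      A.toTotal ((φ.zpow m).toEquiv (i + n) (j + n) ((φ.zpow n).toEquiv i j a)) := by
  rw [toTotal_zpow, toTotal_zpow, toTotal_zpow, zpow_add, Equiv.Perm.mul_apply]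

/-- The graded ring `B` with `B_n = A_{0n}` and `b · b' = b φ^i(b')` for `b ∈ B_i`. -/
noncomputable def gradedRing : GrRingData where
  C n := A.C 0 n
  addgrp n := A.addgrp 0 n
  mul {i j} b b' := A.mul b (A.castAddEquiv (zero_add i) (add_comm j i) ((φ.zpow i).toEquiv 0 j b'))
  one := A.e 0
  mul_add b b' b'' := by rw [map_add, map_add, A.mul_add]
  add_mul b b' b'' := A.add_mul b b' _
  mul_assoc {i j l} a b c := by
    refine ZAlg.heq_of_toTotal_eq_toTotal ?_
    rw [A.mul_assoc]
    refine ZAlg.toTotal_mul_congr rfl ?_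
    rw [ZAlg.toTotal_castAddEquiv, map_mul]
    refine ZAlg.toTotal_mul_congr (ZAlg.toTotal_castAddEquiv _ _ _) ?_
    rw [ZAlg.toTotal_castAddEquiv, toTotal_zpow_add]
    exact (φ.zpow i).toTotal_apply_congr (ZAlg.toTotal_castAddEquiv _ _ _).symm
  one_mul a := by
    refine ZAlg.heq_of_toTotal_eq_toTotal ?_
    rw [A.e_mul, ZAlg.toTotal_castAddEquiv, toTotal_zpow, zpow_zero]
    rfl
  mul_one {i} a := by
    refine ZAlg.heq_of_toTotal_eq_toTotal ?_
    conv_rhs => rw [← A.mul_e a]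
    refine ZAlg.toTotal_mul_congr rfl ?_
    rw [ZAlg.toTotal_castAddEquiv, map_e]
    exact ZAlg.toTotal_e_congr (zero_add i)

/-- `ψ : B̌ ≅ A`, given by `φ^i : B̌_{ij} = A_{0,j-i} → A_{ij}`. -/
noncomputable def checkGradedRingIso : ZAlgIso φ.gradedRing.check A where
  toEquiv i j := ((φ.zpow i).toEquiv 0 (j - i)).trans
    (A.castAddEquiv (zero_add i) (sub_add_cancel j i))
  map_mul {i j l} a b := by
    change A.C 0 (j - i) at a
    change A.C 0 (l - j) at b
    refine ZAlg.toTotal_injective ?_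
    have hab : A.toTotal (φ.gradedRing.check.mul a b) = A.toTotal (A.mul a
        (A.castAddEquiv (zero_add _) (add_comm _ _) ((φ.zpow (j - i)).toEquiv 0 (l - j) b))) :=
      ZAlg.toTotal_eq_toTotal_iff.2 ⟨rfl, by ring, cast_heq _ _⟩
    refine (ZAlg.toTotal_castAddEquiv _ _ _).trans (((φ.zpow i).toTotal_apply_congr hab).trans ?_)
    rw [map_mul]
    refine ZAlg.toTotal_mul_congr (ZAlg.toTotal_castAddEquiv _ _ _).symm
      (Eq.trans ?_ (ZAlg.toTotal_castAddEquiv _ _ _).symm)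
    rw [(φ.zpow i).toTotal_apply_congr (ZAlg.toTotal_castAddEquiv _ _ _), ← toTotal_zpow_add,
      add_sub_cancel]
    rfl
  map_e i := by
    refine ZAlg.toTotal_injective ?_
    have he : A.toTotal (φ.gradedRing.check.e i) = A.toTotal (A.e 0) :=
      ZAlg.toTotal_eq_toTotal_iff.2 ⟨rfl, by ring, cast_heq _ _⟩
    refine (ZAlg.toTotal_castAddEquiv _ _ _).trans (((φ.zpow i).toTotal_apply_congr he).trans ?_)
    rw [map_e]
    exact ZAlg.toTotal_e_congr (zero_add i)

end ZAlgIso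

/-- every 1-periodic ℤ-algebra comes from a ℤ-graded ring.  If
`A ≅ A(1)`, then there is a ℤ-graded ring `B` with components `B_n = A_{0,n}` such that
`B̌ ≅ A` (the graded multiplication being `b_i · b_j = b_i φ^i(b_j)` and the isomorphism
`ψ : B̌ → A` being `φ^i` on `B̌_{ij} = B_{j-i} = A_{0,j-i}`). -/
theorem one_periodic_ZAlgebra_comes_from_graded_ring
    (A : ZAlg) (hper : Nonempty (ZAlgIso A (A.shift 1))) :
    ∃ B : GrRingData, (∀ n : ℤ, B.C n = A.C 0 n) ∧ Nonempty (ZAlgIso (B.check) A) := by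
  obtain ⟨φ⟩ := hper
  exact ⟨φ.gradedRing, fun _ => rfl, ⟨φ.checkGradedRingIso⟩⟩
end

section
/- Let A be a noetherian Z-algebra generated in degree one, and let J ⊆ Z be an infinite subset not bounded above, with B the J-Veronese of A. If M is a graded right A-module whose restriction Res(M) = ⊕_{j∈J} M_j is a torsion B-module (a direct limit of right bounded modules), then M itself is a torsion A-module. -/
/-- A graded right module `M = ⊕_i M_i` over a ℤ-algebra `A`, with
`M_i · A_{ij} ⊆ M_j`. -/
structure ZModule (A : ZAlg) where
  M : ℤ → Type
  addgrp : ∀ i, AddCommGroup (M i)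
  smul : ∀ {i j : ℤ}, M i → A.C i j → M j
  smul_add : ∀ {i j : ℤ} (m : M i) (a b : A.C i j), smul m (a + b) = smul m a + smul m b
  add_smul : ∀ {i j : ℤ} (m n : M i) (a : A.C i j), smul (m + n) a = smul m a + smul n a
  smul_mul : ∀ {i j l : ℤ} (m : M i) (a : A.C i j) (b : A.C j l),
    smul (smul m a) b = smul m (A.mul a b)
  smul_e : ∀ {i : ℤ} (m : M i), smul m (A.e i) = m

attribute [instance] ZModule.addgrp

/-- The projective right module `P_i = e_i A`. -/
def ZAlg.P (A : ZAlg) (i : ℤ) : ZModule A where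
  M j := A.C i j
  addgrp _ := A.addgrp _ _
  smul m a := A.mul m a
  smul_add m a b := A.mul_add m a b
  add_smul m n a := A.add_mul m n a
  smul_mul m a b := A.mul_assoc m a b
  smul_e m := A.mul_e m

/-- A graded submodule of a graded right module. -/
structure SubZMod {A : ZAlg} (N : ZModule A) where
  car : ∀ i : ℤ, AddSubgroup (N.M i)
  smul_mem : ∀ {i j : ℤ} (m : N.M i), m ∈ car i → ∀ a : A.C i j, N.smul m a ∈ car j

/-- A ℤ-algebra is noetherian when the projective generators `P_i` are noetherian
objects, i.e. every ascending chain of graded submodules of `P_i` stabilizes. -/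
def ZAlg.Noetherian (A : ZAlg) : Prop :=
  ∀ i : ℤ, ∀ c : ℕ → SubZMod (A.P i),
    (∀ n : ℕ, ∀ j : ℤ, ((c n).car j : Set ((A.P i).M j)) ⊆ (c (n + 1)).car j) →
    ∃ N : ℕ, ∀ n : ℕ, N ≤ n → c n = c N

/-!
Fix `m ∈ M_k`. The colon submodules `{a ∈ e_k A | m·a·A_{l,l'} = 0 for all l' ∈ J, l' ≥ k + n}`
of `P_k` form an ascending chain in `n`, which stabilizes because `A` is noetherian. Since
`Res M` is torsion, every `a ∈ A_{k,l}` with `l ∈ J` lies in some member of the chain, hence in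
the stable one; taking `l ∈ J` beyond the stable threshold and `b = e_l` gives `m · A_{k,l} = 0`.
As `A` is generated in degree one, `A_{k,l'} = A_{k,l} A_{l,l'}` for all `l' ≥ l`, so
`m · A_{k,l'} = 0` as well.
-/

namespace ZAlg

variable (A : ZAlg)

def mulLeft {i j l : ℤ} (a : A.C i j) : A.C j l →+ A.C i l :=
  AddMonoidHom.mk' (A.mul a) (A.mul_add a)

def productsThrough (k j l : ℤ) : AddSubgroup (A.C k l) :=
  AddSubgroup.closure {y : A.C k l | ∃ (a : A.C k j) (b : A.C j l), y = A.mul a b}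

def IsGeneratedInDegreeOne : Prop :=
  ∀ i l : ℤ, i + 1 < l → ∀ x : A.C i l, x ∈ A.productsThrough i (i + 1) l

variable {A}

theorem mul_mem_productsThrough {i k j l : ℤ} (a : A.C k i) {y : A.C i l}
    (hy : y ∈ A.productsThrough i j l) : A.mul a y ∈ A.productsThrough k j l := by
  suffices (A.productsThrough i j l).map (A.mulLeft a) ≤ A.productsThrough k j l from
    this ⟨y, hy, rfl⟩
  rw [productsThrough, AddMonoidHom.map_closure, AddSubgroup.closure_le]
  rintro _ ⟨_, ⟨c, d, rfl⟩, rfl⟩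
  exact AddSubgroup.subset_closure ⟨A.mul a c, d, (A.mul_assoc a c d).symm⟩

theorem IsGeneratedInDegreeOne.mem_productsThrough_succ (hA : A.IsGeneratedInDegreeOne)
    {i l : ℤ} (hil : i < l) (x : A.C i l) : x ∈ A.productsThrough i (i + 1) l := by
  rcases (Int.add_one_le_of_lt hil).lt_or_eq with hlt | rfl
  · exact hA i l hlt x
  · exact AddSubgroup.subset_closure ⟨x, A.e (i + 1), (A.mul_e x).symm⟩

theorem IsGeneratedInDegreeOne.mem_productsThrough (hA : A.IsGeneratedInDegreeOne)
    {k j l : ℤ} (hkj : k ≤ j) (hjl : j ≤ l) (x : A.C k l) : x ∈ A.productsThrough k j l := by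
  induction j, hkj using Int.leInduction generalizing x with
  | base => exact AddSubgroup.subset_closure ⟨A.e k, x, (A.e_mul x).symm⟩
  | succ j _ ih =>
    refine (AddSubgroup.closure_le _).2 ?_ (ih (by omega) x)
    rintro _ ⟨a, b, rfl⟩
    exact mul_mem_productsThrough a (hA.mem_productsThrough_succ (by omega) b)

end ZAlg

namespace ZModule

variable {A : ZAlg} (M : ZModule A)

def smulLeft {i j : ℤ} (m : M.M i) : A.C i j →+ M.M j :=
  AddMonoidHom.mk' (M.smul m) (M.smul_add m)

def smulRight {i j : ℤ} (a : A.C i j) : M.M i →+ M.M j :=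
  AddMonoidHom.mk' (M.smul · a) (fun m n => M.add_smul m n a)

def killedInDegrees (S : Set ℤ) : SubZMod M where
  car l := ⨅ l' ∈ S, ⨅ b : A.C l l', (M.smulRight b).ker
  smul_mem {i j} x hx a := by
    simp only [AddSubgroup.mem_iInf, AddMonoidHom.mem_ker, smulRight, AddMonoidHom.mk'_apply]
      at hx ⊢
    intro l' hl' b
    rw [M.smul_mul]
    exact hx l' hl' (A.mul a b)

theorem mem_killedInDegrees {S : Set ℤ} {l : ℤ} {x : M.M l} :
    x ∈ (M.killedInDegrees S).car l ↔ ∀ l' ∈ S, ∀ b : A.C l l', M.smul x b = 0 := by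
  simp [killedInDegrees, smulRight]

end ZModule

namespace SubZMod

variable {A : ZAlg} {M : ZModule A}

def colon (T : SubZMod M) {k : ℤ} (m : M.M k) : SubZMod (A.P k) where
  car l := (T.car l).comap (M.smulLeft m)
  smul_mem {i j} (a : A.C k i) ha x := by
    show M.smul m (A.mul a x) ∈ T.car j
    rw [← M.smul_mul]
    exact T.smul_mem (M.smul m a) ha x

theorem mem_colon {T : SubZMod M} {k l : ℤ} {m : M.M k} {a : A.C k l} :
    a ∈ (T.colon m).car l ↔ M.smul m a ∈ T.car l :=
  Iff.rfl

end SubZMod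

open ZModule SubZMod in
theorem ZAlg.Noetherian.exists_smul_eq_zero {A : ZAlg} (hA : A.Noetherian) {J : Set ℤ}
    (hJ : ∀ n : ℤ, ∃ j ∈ J, n ≤ j) {M : ZModule A}
    (hres : ∀ k ∈ J, ∀ m : M.M k, ∃ N : ℤ, ∀ l ∈ J, N ≤ l → ∀ a : A.C k l, M.smul m a = 0)
    {k : ℤ} (m : M.M k) : ∃ l, k ≤ l ∧ ∀ a : A.C k l, M.smul m a = 0 := by
  let c : ℕ → SubZMod (A.P k) := fun n => (M.killedInDegrees (J ∩ Set.Ici (k + n))).colon m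
  have hc : ∀ n l (a : A.C k l), a ∈ (c n).car l ↔
      ∀ l' ∈ J, k + n ≤ l' → ∀ b : A.C l l', M.smul (M.smul m a) b = 0 := by
    intro n l a
    simp only [c, mem_colon, mem_killedInDegrees, Set.mem_inter_iff, Set.mem_Ici, and_imp]
  obtain ⟨n₀, hn₀⟩ := hA k c fun n l a ha =>
    (hc _ _ _).2 fun l' hl' hle => (hc _ _ _).1 ha l' hl' (by omega)
  have hstable : ∀ l ∈ J, ∀ a : A.C k l, a ∈ (c n₀).car l := by
    intro l hl a
    obtain ⟨N, hN⟩ := hres l hl (M.smul m a)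
    have ha : a ∈ (c (max n₀ (N - k).toNat)).car l :=
      (hc _ _ _).2 fun l' hl' hle => hN l' hl' (by omega)
    rwa [hn₀ _ (le_max_left _ _)] at ha
  obtain ⟨l, hlJ, hle⟩ := hJ (k + n₀)
  refine ⟨l, by omega, fun a => ?_⟩
  simpa [M.smul_e] using (hc _ _ _).1 (hstable l hlJ a) l hlJ hle (A.e l)

theorem ZModule.smul_eq_zero_of_le {A : ZAlg} (hA : A.IsGeneratedInDegreeOne) (M : ZModule A)
    {k l l' : ℤ} {m : M.M k} (hkl : k ≤ l) (hm : ∀ a : A.C k l, M.smul m a = 0) (hll' : l ≤ l')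
    (x : A.C k l') : M.smul m x = 0 := by
  suffices A.productsThrough k l l' ≤ (M.smulLeft m).ker from
    this (hA.mem_productsThrough hkl hll' x)
  rw [ZAlg.productsThrough, AddSubgroup.closure_le]
  rintro _ ⟨a, b, rfl⟩
  show M.smul m (A.mul a b) = 0
  rw [← M.smul_mul, hm a]
  exact (M.smulRight b).map_zero

theorem veronese_restriction_detects_torsion_general
    (A : ZAlg)
    (hNoeth : A.Noetherian)
    -- … and generated in degree one
    (hgen : ∀ i l : ℤ, i + 1 < l → ∀ x : A.C i l,
      x ∈ AddSubgroup.closure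
        {y : A.C i l | ∃ (a : A.C i (i + 1)) (b : A.C (i + 1) l), y = A.mul a b})
    (J : Set ℤ) (hJub : ∀ n : ℤ, ∃ j ∈ J, n ≤ j)
    (M : ZModule A)
    -- the restriction of M to the J-Veronese of A is torsion
    (hres : ∀ k ∈ J, ∀ m : M.M k, ∃ N : ℤ, ∀ l ∈ J, N ≤ l →
      ∀ a : A.C k l, M.smul m a = 0) :
    -- M itself is torsion
    ∀ (k : ℤ) (m : M.M k), ∃ N : ℤ, ∀ l : ℤ, N ≤ l → ∀ a : A.C k l, M.smul m a = 0 := by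
  intro k m
  obtain ⟨l, hkl, hm⟩ := hNoeth.exists_smul_eq_zero hJub hres m
  exact ⟨l, fun l' hll' => M.smul_eq_zero_of_le hgen hkl hm hll'⟩

/-- Let `A` be a noetherian ℤ-algebra which is positively graded and
generated in degree one, `J ⊆ ℤ` an infinite subset not bounded above and `B` the
`J`-Veronese of `A`.  If `M` is a graded right `A`-module whose restriction
`Res M = ⊕_{j ∈ J} M_j` is a torsion `B`-module (every element is annihilated by
`B_{kl} = A_{kl}` for `l ∈ J` large), then `M` itself is torsion (every element `m ∈ M_k`
satisfies `m · A_{kl} = 0` for all `l ≫ 0`). -/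
theorem veronese_restriction_detects_torsion
    (A : ZAlg)
    (hNoeth : A.Noetherian)
    -- A is positively graded …
    (hpos : ∀ i j : ℤ, j < i → ∀ a : A.C i j, a = 0)
    -- … and generated in degree one
    (hgen : ∀ i l : ℤ, i + 1 < l → ∀ x : A.C i l,
      x ∈ AddSubgroup.closure
        {y : A.C i l | ∃ (a : A.C i (i + 1)) (b : A.C (i + 1) l), y = A.mul a b})
    (J : Set ℤ) (hJinf : J.Infinite) (hJub : ∀ n : ℤ, ∃ j ∈ J, n ≤ j)
    (M : ZModule A)
    -- the restriction of M to the J-Veronese of A is torsion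
    (hres : ∀ k ∈ J, ∀ m : M.M k, ∃ N : ℤ, ∀ l ∈ J, N ≤ l →
      ∀ a : A.C k l, M.smul m a = 0) :
    -- M itself is torsion
    ∀ (k : ℤ) (m : M.M k), ∃ N : ℤ, ∀ l : ℤ, N ≤ l → ∀ a : A.C k l, M.smul m a = 0 :=
  veronese_restriction_detects_torsion_general A hNoeth hgen J hJub M hres
end

section
/- Let A be a three-dimensional cubic regular Z-algebra over a field k, i.e. a connected Z-algebra such that each simple module S_i admits a minimal projective resolution 0 → P_{i+4} → P_{i+3}^2 → P_{i+1}^2 → P_i → S_i → 0. Then dim_k A_{i,i+n} = 0 for n < 0, dim_k A_{i,i+n} = (k+1)^2 if n = 2k ≥ 0, and dim_k A_{i,i+n} = (k+1)(k+2) if n = 2k+1 ≥ 0. -/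
open Module

/-! The exactness of `0 → P_{i+4} → P_{i+3}² → P_{i+1}² → P_i` in each degree `j ≠ i` says that
the Euler characteristic `dim A_{ij} - 2 dim A_{i+1,j} + 2 dim A_{i+3,j} - dim A_{i+4,j}` vanishes.
With `dim A_{ii} = 1` and `dim A_{ij} = 0` for `j < i`, this recurrence determines `dim A_{ij}` by
induction on `j - i`, and the coefficients of `1 / ((1 - t)² (1 - t²))`, the inverse of
`1 - 2t + 2t³ - t⁴`, satisfy the same recurrence. -/

theorem Module.finrank_add_finrank_eq_of_exact {k : Type*} [DivisionRing k]
    {V₀ V₁ V₂ V₃ : Type*} [AddCommGroup V₀] [Module k V₀] [FiniteDimensional k V₀]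
    [AddCommGroup V₁] [Module k V₁] [FiniteDimensional k V₁]
    [AddCommGroup V₂] [Module k V₂] [FiniteDimensional k V₂]
    [AddCommGroup V₃] [Module k V₃] [FiniteDimensional k V₃]
    {f : V₀ →ₗ[k] V₁} {g : V₁ →ₗ[k] V₂} {h : V₂ →ₗ[k] V₃}
    (hf : Function.Injective f) (hfg : Function.Exact f g) (hgh : Function.Exact g h)
    (hh : Function.Surjective h) :
    finrank k V₀ + finrank k V₂ = finrank k V₁ + finrank k V₃ := by
  have euler := sum_neg_one_pow_finrank_eq_zero_of_exact_six (0 : PUnit →ₗ[k] V₀) f g h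
    (0 : V₃ →ₗ[k] PUnit) (Function.injective_of_subsingleton _)
    ((LinearMap.exact_zero_iff_injective _ f).mpr hf) hfg hgh
    ((LinearMap.exact_zero_iff_surjective _ h).mpr hh) (Function.surjective_to_subsingleton _)
  simp only [finrank_zero_of_subsingleton, Nat.cast_zero] at euler
  omega

def cubicHilbert : ℤ → ℕ
  | (n : ℕ) => (n / 2 + 1) * ((n + 1) / 2 + 1)
  | Int.negSucc _ => 0

theorem cubicHilbert_of_neg {n : ℤ} (hn : n < 0) : cubicHilbert n = 0 := by
  cases n with
  | ofNat m => exact absurd hn (Int.natCast_nonneg m).not_gt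
  | negSucc => rfl

theorem cubicHilbert_natCast_add_two (n : ℕ) :
    cubicHilbert (n + 2 : ℕ) = cubicHilbert n + n + 3 := by
  have hsum : n / 2 + (n + 1) / 2 = n := by omega
  simp only [cubicHilbert, show (n + 2) / 2 = n / 2 + 1 by omega,
    show (n + 2 + 1) / 2 = (n + 1) / 2 + 1 by omega]
  linarith

theorem cubicHilbert_two_mul (m : ℕ) : cubicHilbert (2 * m : ℕ) = (m + 1) ^ 2 := by
  simp only [cubicHilbert, show 2 * m / 2 = m by omega, show (2 * m + 1) / 2 = m by omega]
  ring

theorem cubicHilbert_two_mul_add_one (m : ℕ) :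
    cubicHilbert (2 * m + 1 : ℕ) = (m + 1) * (m + 2) := by
  simp only [cubicHilbert, show (2 * m + 1) / 2 = m by omega,
    show (2 * m + 1 + 1) / 2 = m + 1 by omega]

theorem cubicHilbert_recurrence {n : ℤ} (hn : n ≠ 0) :
    cubicHilbert n + 2 * cubicHilbert (n - 3) =
      2 * cubicHilbert (n - 1) + cubicHilbert (n - 4) := by
  rcases hn.lt_or_gt with hneg | hpos
  · simp only [cubicHilbert_of_neg, hneg, show n - 1 < 0 by omega, show n - 3 < 0 by omega,
      show n - 4 < 0 by omega]
  obtain ⟨m, rfl⟩ := Int.eq_ofNat_of_zero_le hpos.le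
  match m with
  | 0 => exact absurd hpos (lt_irrefl 0)
  | 1 | 2 | 3 => decide
  | m + 4 =>
    rw [show ((m + 4 : ℕ) : ℤ) - 1 = (m + 3 : ℕ) by omega,
      show ((m + 4 : ℕ) : ℤ) - 3 = (m + 1 : ℕ) by omega, show ((m + 4 : ℕ) : ℤ) - 4 = m by omega,
      cubicHilbert_natCast_add_two (m + 2), cubicHilbert_natCast_add_two (m + 1),
      cubicHilbert_natCast_add_two m]
    omega

theorem eq_cubicHilbert_of_recurrence (d : ℤ → ℤ → ℕ) (h_lt : ∀ i j, j < i → d i j = 0)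
    (h_diag : ∀ i, d i i = 1)
    (h_rec : ∀ i j, j ≠ i → d i j + 2 * d (i + 3) j = 2 * d (i + 1) j + d (i + 4) j)
    (i j : ℤ) : d i j = cubicHilbert (j - i) := by
  rcases lt_trichotomy j i with hji | rfl | hij
  · rw [h_lt i j hji, cubicHilbert_of_neg (by omega)]
  · rw [h_diag, sub_self]
    rfl
  · have h₁ := eq_cubicHilbert_of_recurrence d h_lt h_diag h_rec (i + 1) j
    have h₃ := eq_cubicHilbert_of_recurrence d h_lt h_diag h_rec (i + 3) j
    have h₄ := eq_cubicHilbert_of_recurrence d h_lt h_diag h_rec (i + 4) j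
    rw [← sub_sub] at h₁ h₃ h₄
    have := cubicHilbert_recurrence (sub_ne_zero.mpr hij.ne')
    have := h_rec i j hij.ne'
    omega
termination_by (j - i).toNat
/-- Hilbert function of a three-dimensional cubic regular ℤ-algebra.
The ℤ-algebra is given by its components `A i j` (finite dimensional `K`-vector spaces),
connected and positively graded; the defining minimal resolutions
`0 → P_{i+4} → P_{i+3}^2 → P_{i+1}^2 → P_i → S_i → 0` are encoded degreewise as exact
sequences `0 → A_{i+4,j} → A_{i+3,j}^2 → A_{i+1,j}^2 → A_{i,j} → (S_i)_j → 0`.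
Conclusion: `dim A_{i,i+n} = 0` for `n < 0`, `(k+1)^2` for `n = 2k ≥ 0` and
`(k+1)(k+2)` for `n = 2k+1 ≥ 0`. -/
theorem cubic_regular_hilbert_function
    (K : Type) [Field K]
    (A : ℤ → ℤ → Type)
    [∀ i j, AddCommGroup (A i j)] [∀ i j, Module K (A i j)]
    (hfd : ∀ i j, FiniteDimensional K (A i j))
    (hconn : ∀ i, finrank K (A i i) = 1)
    (hpos : ∀ i j : ℤ, j < i → Subsingleton (A i j))
    (hres : ∀ i j : ℤ,
      ∃ (f : A (i + 4) j →ₗ[K] (Fin 2 → A (i + 3) j))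
        (g : (Fin 2 → A (i + 3) j) →ₗ[K] (Fin 2 → A (i + 1) j))
        (h : (Fin 2 → A (i + 1) j) →ₗ[K] A i j),
        Function.Injective f ∧ Function.Exact f g ∧ Function.Exact g h ∧
        (j ≠ i → Function.Surjective h) ∧ (j = i → h = 0)) :
    (∀ (i : ℤ) (n : ℤ), n < 0 → finrank K (A i (i + n)) = 0) ∧
    (∀ (i : ℤ) (m : ℕ), finrank K (A i (i + 2 * (m : ℤ))) = (m + 1) ^ 2) ∧
    (∀ (i : ℤ) (m : ℕ), finrank K (A i (i + (2 * (m : ℤ) + 1))) = (m + 1) * (m + 2)) := by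
  have h_lt (i j : ℤ) (hji : j < i) : finrank K (A i j) = 0 :=
    have := hpos i j hji
    finrank_zero_of_subsingleton
  have h_rec (i j : ℤ) (hij : j ≠ i) : finrank K (A i j) + 2 * finrank K (A (i + 3) j) =
      2 * finrank K (A (i + 1) j) + finrank K (A (i + 4) j) := by
    obtain ⟨f, g, h, hf, hfg, hgh, hh, -⟩ := hres i j
    have := finrank_add_finrank_eq_of_exact hf hfg hgh (hh hij)
    simp only [finrank_pi_fintype, Fin.sum_univ_two] at this
    omega
  have hdim (i j : ℤ) : finrank K (A i j) = cubicHilbert (j - i) :=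
    eq_cubicHilbert_of_recurrence (fun i j ↦ finrank K (A i j)) h_lt hconn h_rec i j
  refine ⟨fun i n hn ↦ h_lt i _ (by omega), fun i m ↦ ?_, fun i m ↦ ?_⟩
  · simpa [hdim] using cubicHilbert_two_mul m
  · simpa [hdim] using cubicHilbert_two_mul_add_one m
end

section
/- Let k be a number field and C a smooth elliptic curve over k with a rational point o, identified with its group of rational points. Suppose q ∈ C(k) is not divisible by 3 in the group C(k). Set d_0 = 3(o) and d_1 = 2(o) + (q), and L_0 = O_C(d_0), L_1 = O_C(d_1). If C has no complex multiplication over the algebraic closure, then there is no automorphism σ of C over k with σ^* L_0 ≅ L_1. Hence L_0 and L_1 of degree 3 lie in different Aut(C)-orbits. -/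
/-! Every automorphism of a curve without complex multiplication is `p ↦ ±p + t`, so it pulls
`3(o)` back to a divisor `3(s)` supported at a single point, whose sum `3 • s` is divisible by
three. Linear equivalence preserves the sum, while `2(o) + (q)` sums to `q`. -/

section DivisorSum

variable {P : Type} [AddCommGroup P]

theorem Finsupp.sum_zsmul_single (s : P) (n : ℤ) :
    (Finsupp.single s n).sum (fun p n => n • p) = n • s :=
  Finsupp.sum_single_index (zero_smul ℤ s)

theorem Finsupp.sum_zsmul_single_add_single (a b : P) (m n : ℤ) :
    (Finsupp.single a m + Finsupp.single b n).sum (fun p n => n • p) = m • a + n • b := by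
  rw [Finsupp.sum_add_index' (fun p => zero_smul ℤ p) (fun p m n => add_smul m n p),
    Finsupp.sum_zsmul_single, Finsupp.sum_zsmul_single]

theorem ne_of_single_three_of_not_three_dvd {PicC : Type} (O : (P →₀ ℤ) → PicC)
    (hO : ∀ d d' : P →₀ ℤ, O d = O d' →
      d.sum (fun p n => n • p) = d'.sum (fun p n => n • p))
    {q : P} (hq : ∀ t : P, (3 : ℤ) • t ≠ q) (s : P) :
    O (Finsupp.single s 3) ≠ O (Finsupp.single 0 2 + Finsupp.single q 1) := by
  intro h
  have hsum := hO _ _ h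
  rw [Finsupp.sum_zsmul_single, Finsupp.sum_zsmul_single_add_single, smul_zero, one_smul,
    zero_add] at hsum
  exact hq s hsum

end DivisorSum

theorem no_automorphism_relating_generic_degree_three_bundles_general
    (P : Type) [AddCommGroup P]  -- P = C(k), Mordell–Weil
    (PicC : Type) (O : (P →₀ ℤ) → PicC)
    (hO : ∀ d d' : P →₀ ℤ, O d = O d' ↔
      (d.sum (fun _ n => n) = d'.sum (fun _ n => n) ∧
       d.sum (fun p n => n • p) = d'.sum (fun p n => n • p)))
    (Aut : Type) (pull : Aut → PicC → PicC)
    -- no complex multiplication: automorphisms are exactly ±translations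
    (hAutform : ∀ σ : Aut,
      (∃ t : P, ∀ d : P →₀ ℤ, pull σ (O d) = O (Finsupp.mapDomain (fun p => p - t) d)) ∨
      (∃ t : P, ∀ d : P →₀ ℤ, pull σ (O d) = O (Finsupp.mapDomain (fun p => t - p) d)))
    (q : P) (hq : ∀ t : P, (3 : ℤ) • t ≠ q) :
    ¬ ∃ σ : Aut,
        pull σ (O (Finsupp.single (0 : P) 3)) =
          O (Finsupp.single (0 : P) 2 + Finsupp.single q 1) := by
  rintro ⟨σ, hσ⟩
  have hne := ne_of_single_three_of_not_three_dvd O (fun d d' h => ((hO d d').1 h).2) hq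
  rcases hAutform σ with ⟨t, ht⟩ | ⟨t, ht⟩ <;>
    rw [ht, Finsupp.mapDomain_single] at hσ <;> exact hne _ hσ

/-- Let `k` be a number field and `C` a smooth elliptic curve over `k` with
a rational point `o` and no complex multiplication over the algebraic closure.  Encode:
`P = C(k)` is the Mordell–Weil group (finitely generated, with `o = 0`); divisors are
`d : P →₀ ℤ`; `O d ∈ PicC` is the class of `O_C(d)`; on an elliptic curve
`O d = O d'` iff the degrees agree and the sums `|d| = Σ n_p · p` agree (`hO`).  Absence
of complex multiplication means every automorphism `σ` of `C` is of the form
`σ_t : p ↦ t + p` or `τ_t : p ↦ t − p`, so on divisors `σ^*` is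
`mapDomain (· − t)` resp. `mapDomain (t − ·)` (`hAutform`).  Claim: if `q ∈ C(k)` is not
divisible by 3, then with `d₀ = 3(o)` and `d₁ = 2(o) + (q)` there is no automorphism `σ`
of `C` with `σ^* O_C(d₀) ≅ O_C(d₁)`; hence `L₀, L₁` lie in different `Aut(C)`-orbits. -/
theorem no_automorphism_relating_generic_degree_three_bundles
    (k : Type) [Field k] [NumberField k]
    (P : Type) [AddCommGroup P] [Module.Finite ℤ P]  -- P = C(k), Mordell–Weil
    (PicC : Type) (O : (P →₀ ℤ) → PicC)
    (hO : ∀ d d' : P →₀ ℤ, O d = O d' ↔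
      (d.sum (fun _ n => n) = d'.sum (fun _ n => n) ∧
       d.sum (fun p n => n • p) = d'.sum (fun p n => n • p)))
    (Aut : Type) (pull : Aut → PicC → PicC)
    -- no complex multiplication: automorphisms are exactly ±translations
    (hAutform : ∀ σ : Aut,
      (∃ t : P, ∀ d : P →₀ ℤ, pull σ (O d) = O (Finsupp.mapDomain (fun p => p - t) d)) ∨
      (∃ t : P, ∀ d : P →₀ ℤ, pull σ (O d) = O (Finsupp.mapDomain (fun p => t - p) d)))
    (q : P) (hq : ∀ t : P, (3 : ℤ) • t ≠ q) :
    ¬ ∃ σ : Aut,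
        pull σ (O (Finsupp.single (0 : P) 3)) =
          O (Finsupp.single (0 : P) 2 + Finsupp.single q 1) :=
  no_automorphism_relating_generic_degree_three_bundles_general P PicC O hO Aut pull hAutform q hq
end

section
/- Let A be an elliptic quadric (cubic 3-dimensional regular Z-algebra) over an algebraically closed field k of characteristic ≠ 2, with associated elliptic helix (C, (L_i)_{i∈Z}). Suppose there exists a group homomorphism η : Pic^0(C) → Aut(C) with η(A)^*(B) ≅ B ⊗ A^{⊗ -b} for all A ∈ Pic^0(C) and B ∈ Pic(C) of total degree b. Then there exists σ ∈ Aut(C) with σ^*(B) ≅ B ⊗ L_2 ⊗ L_0^{-1} for all B ∈ Pic^2(C); consequently (C, L_0, L_1, L_2) ≅ (C, L_2, L_3, L_4) and A ≅ A(2) as Z-algebras. -/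
/-!
The helix relation says exactly that `i ↦ L (i + 2) * (L i)⁻¹` is `1`-periodic, so every
`L (i + 2)` equals `L i * D` with `D = L 2 * (L 0)⁻¹ ∈ Pic⁰(C)`. Halving `D⁻¹` in `Pic⁰(C)`
gives `A` with `A ^ (-2) = D`, and `σ = η A` then multiplies every degree-2 class by `D`.
-/

theorem helix_mul_inv_eq {G : Type*} [CommGroup G] {L : ℤ → G}
    (hhelix : ∀ i : ℤ, L i * (L (i + 1))⁻¹ * (L (i + 2))⁻¹ * L (i + 3) = 1) (i : ℤ) :
    L (i + 2) * (L i)⁻¹ = L 2 * (L 0)⁻¹ := by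
  have hperiodic : Function.Periodic (fun j => L (j + 2) * (L j)⁻¹) 1 := by
    intro j
    dsimp only
    rw [show j + 1 + 2 = j + 3 by ring, ← div_eq_one, ← hhelix j]
    simp only [div_eq_mul_inv, mul_inv_rev, inv_inv, mul_comm, mul_left_comm, mul_assoc]
  simpa using hperiodic.zsmul_eq i

theorem map_inv_of_map_mul {G : Type*} [Group G] (f : G → ℤ)
    (hf : ∀ a b : G, f (a * b) = f a + f b) (a : G) : f a⁻¹ = -f a :=
  congrArg Multiplicative.toAdd
    ((MonoidHom.mk' (fun x => Multiplicative.ofAdd (f x)) hf).map_inv a)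

theorem exists_zpow_neg_two_eq {G ι : Type*} [CommGroup G] {degC : ι → G → ℤ}
    (hdegC : ∀ (E : ι) (a b : G), degC E (a * b) = degC E a + degC E b)
    (hdiv : ∀ D : G, (∀ E : ι, degC E D = 0) →
      ∃ A : G, (∀ E : ι, degC E A = 0) ∧ A ^ (2 : ℕ) = D)
    {D : G} (hD : ∀ E : ι, degC E D = 0) :
    ∃ A : G, (∀ E : ι, degC E A = 0) ∧ A ^ (-2 : ℤ) = D := by
  obtain ⟨A, hA0, hA⟩ := hdiv D⁻¹ fun E => by
    rw [map_inv_of_map_mul (degC E) (hdegC E), hD E, neg_zero]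
  exact ⟨A, hA0, by rw [zpow_neg, zpow_ofNat, hA, inv_inv]⟩

theorem elliptic_quadric_is_two_periodic_general
    (Pic : Type) [CommGroup Pic] (Component : Type)
    (deg : Pic → ℤ)
    (degC : Component → Pic → ℤ)
    (hdegC : ∀ (E : Component) (L M : Pic), degC E (L * M) = degC E L + degC E M)
    (Aut : Type) [Group Aut]
    (pull : Aut → Pic → Pic)
    -- Pic⁰(C) is 2-divisible (char k ≠ 2)
    (hdiv : ∀ D : Pic, (∀ E : Component, degC E D = 0) →
      ∃ A : Pic, (∀ E : Component, degC E A = 0) ∧ A ^ (2 : ℕ) = D)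
    (η : Pic → Aut)
    (hη : ∀ A : Pic, (∀ E : Component, degC E A = 0) →
      ∀ B : Pic, pull (η A) B = B * A ^ (-(deg B)))
    -- the cubic elliptic helix of the quadric A
    (L : ℤ → Pic)
    (hhelix : ∀ i : ℤ, L i * (L (i + 1))⁻¹ * (L (i + 2))⁻¹ * L (i + 3) = 1)
    (hdegL : ∀ i : ℤ, deg (L i) = 2)
    (hPic0 : ∀ E : Component, degC E (L 2 * (L 0)⁻¹) = 0) :
    ∃ σ : Aut,
      (∀ B : Pic, deg B = 2 → pull σ B = B * (L 2) * (L 0)⁻¹) ∧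
      (∀ i : ℤ, pull σ (L i) = L (i + 2)) ∧
      pull σ (L 0) = L 2 ∧ pull σ (L 1) = L 3 ∧ pull σ (L 2) = L 4 := by
  obtain ⟨A, hA0, hA⟩ := exists_zpow_neg_two_eq hdegC hdiv hPic0
  have hσ (B : Pic) (hB : deg B = 2) : pull (η A) B = B * L 2 * (L 0)⁻¹ := by
    rw [hη A hA0, hB, hA, mul_assoc]
  have hσL (i : ℤ) : pull (η A) (L i) = L (i + 2) := by
    rw [hσ _ (hdegL i), mul_assoc, ← helix_mul_inv_eq hhelix i, mul_inv_cancel_comm_assoc]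
  exact ⟨η A, hσ, hσL, hσL 0, hσL 1, hσL 2⟩

/-- 2-periodicity of elliptic quadrics.  Let `A` be an elliptic quadric
(cubic 3-dimensional regular ℤ-algebra) over an algebraically closed field `k` of
characteristic ≠ 2, with associated cubic elliptic helix `(C, (L_i)_{i ∈ ℤ})`: the `L i`
are classes in the Picard group `Pic` of the genus-one curve `C`, each of total degree 2,
satisfying `L_i ⊗ L_{i+1}⁻¹ ⊗ L_{i+2}⁻¹ ⊗ L_{i+3} ≅ O_C`, and (by admissibility of the
associated quadruple) `L_2 ⊗ L_0⁻¹` has degree zero on every component.  `Aut` is the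
automorphism group of `C` acting on `Pic` by pullback; `Pic⁰(C)` is 2-divisible since
`char k ≠ 2` (`hdiv`); `η : Pic⁰(C) → Aut(C)` satisfies `η(A)^*(B) ≅ B ⊗ A^{⊗ -deg B}`.
Claim: there is `σ ∈ Aut(C)` with `σ^*(B) ≅ B ⊗ L_2 ⊗ L_0⁻¹` for every `B ∈ Pic²(C)`;
consequently `σ^* L_i ≅ L_{i+2}` for all `i`, i.e. the quadruple `(C, L0, L1, L2)` is
isomorphic to `(C, L2, L3, L4)`, and hence `A ≅ A(2)` (quadrics being determined by
their quadruples). -/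
theorem elliptic_quadric_is_two_periodic
    (k : Type) [Field k] [IsAlgClosed k] (hchar : ringChar k ≠ 2)
    (Pic : Type) [CommGroup Pic] (Component : Type)
    (deg : Pic → ℤ) (hdeg : ∀ L M : Pic, deg (L * M) = deg L + deg M)
    (degC : Component → Pic → ℤ)
    (hdegC : ∀ (E : Component) (L M : Pic), degC E (L * M) = degC E L + degC E M)
    (Aut : Type) [Group Aut]
    (pull : Aut → Pic → Pic)
    (hpullmul : ∀ (σ : Aut) (L M : Pic), pull σ (L * M) = pull σ L * pull σ M)
    -- Pic⁰(C) is 2-divisible (char k ≠ 2)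
    (hdiv : ∀ D : Pic, (∀ E : Component, degC E D = 0) →
      ∃ A : Pic, (∀ E : Component, degC E A = 0) ∧ A ^ (2 : ℕ) = D)
    (η : Pic → Aut)
    (hη : ∀ A : Pic, (∀ E : Component, degC E A = 0) →
      ∀ B : Pic, pull (η A) B = B * A ^ (-(deg B)))
    -- the cubic elliptic helix of the quadric A
    (L : ℤ → Pic)
    (hhelix : ∀ i : ℤ, L i * (L (i + 1))⁻¹ * (L (i + 2))⁻¹ * L (i + 3) = 1)
    (hdegL : ∀ i : ℤ, deg (L i) = 2)
    (hPic0 : ∀ E : Component, degC E (L 2 * (L 0)⁻¹) = 0) :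
    ∃ σ : Aut,
      (∀ B : Pic, deg B = 2 → pull σ B = B * (L 2) * (L 0)⁻¹) ∧
      (∀ i : ℤ, pull σ (L i) = L (i + 2)) ∧
      pull σ (L 0) = L 2 ∧ pull σ (L 1) = L 3 ∧ pull σ (L 2) = L 4 :=
  elliptic_quadric_is_two_periodic_general Pic Component deg degC hdegC Aut pull hdiv η hη L hhelix
    hdegL hPic0
end

section
/- Let V_0, V_1, V_2, V_3 be two-dimensional k-vector spaces with bases x_i, y_i, and let w = x_0 x_1 y_2 y_3 − y_0 x_1 x_2 y_3 − x_0 y_1 y_2 x_3 + y_0 y_1 x_2 x_3 ∈ V_0 ⊗ V_1 ⊗ V_2 ⊗ V_3 (the linear quintuple tensor). Then w is geometric: for each j ∈ {0,1,2,3} (mod 4) and all non-zero φ_j ∈ V_j^*, φ_{j+1} ∈ V_{j+1}^*, the contraction ⟨φ_j ⊗ φ_{j+1}, w⟩ ≠ 0. -/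
/-!
The four-variable form of `w` factors as a product of two `2 × 2` determinants,
`w φ0 φ1 φ2 φ3 = (φ0 x0 φ2 y2 - φ0 y0 φ2 x2) * (φ1 x1 φ3 y3 - φ1 y1 φ3 x3)`,
one pairing the slots `0, 2` and the other the slots `1, 3`. Two cyclically adjacent slots
always lie in different factors, and a determinant with a non-zero functional as one argument
can be made non-zero by taking a coordinate functional as the other.
-/

open Module

section DualDet

variable {R M N : Type*} [CommRing R] [AddCommGroup M] [Module R M] [AddCommGroup N] [Module R N]

noncomputable def dualDet (b : Basis (Fin 2) R M) (c : Basis (Fin 2) R N) (φ : Dual R M)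
    (ψ : Dual R N) : R :=
  φ (b 0) * ψ (c 1) - φ (b 1) * ψ (c 0)

lemma dualDet_swap (b : Basis (Fin 2) R M) (c : Basis (Fin 2) R N) (φ : Dual R M)
    (ψ : Dual R N) : dualDet c b ψ φ = -dualDet b c φ ψ := by
  unfold dualDet
  ring

lemma Module.Basis.apply_zero_ne_zero_or_apply_one_ne_zero (b : Basis (Fin 2) R M)
    {φ : Dual R M} (hφ : φ ≠ 0) : φ (b 0) ≠ 0 ∨ φ (b 1) ≠ 0 := by
  contrapose! hφ
  exact b.ext fun i => by fin_cases i <;> simp [hφ]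

lemma exists_dualDet_ne_zero_right (b : Basis (Fin 2) R M) (c : Basis (Fin 2) R N)
    {φ : Dual R M} (hφ : φ ≠ 0) : ∃ ψ, dualDet b c φ ψ ≠ 0 := by
  rcases b.apply_zero_ne_zero_or_apply_one_ne_zero hφ with h | h
  · exact ⟨c.coord 1, by simpa [dualDet] using h⟩
  · exact ⟨c.coord 0, by simpa [dualDet] using h⟩

lemma exists_dualDet_ne_zero_left (b : Basis (Fin 2) R M) (c : Basis (Fin 2) R N)
    {ψ : Dual R N} (hψ : ψ ≠ 0) : ∃ φ, dualDet b c φ ψ ≠ 0 := by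
  obtain ⟨φ, hφ⟩ := exists_dualDet_ne_zero_right c b hψ
  exact ⟨φ, by rwa [dualDet_swap, neg_ne_zero] at hφ⟩

end DualDet

theorem linear_quintuple_tensor_is_geometric_general
    (k V0 V1 V2 V3 : Type) [Field k]
    [AddCommGroup V0] [Module k V0]
    [AddCommGroup V1] [Module k V1]
    [AddCommGroup V2] [Module k V2]
    [AddCommGroup V3] [Module k V3]
    (x0 y0 : V0) (x1 y1 : V1) (x2 y2 : V2) (x3 y3 : V3)
    (hb0 : ∃ b : Basis (Fin 2) k V0, b 0 = x0 ∧ b 1 = y0)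
    (hb1 : ∃ b : Basis (Fin 2) k V1, b 0 = x1 ∧ b 1 = y1)
    (hb2 : ∃ b : Basis (Fin 2) k V2, b 0 = x2 ∧ b 1 = y2)
    (hb3 : ∃ b : Basis (Fin 2) k V3, b 0 = x3 ∧ b 1 = y3)
    (w : Dual k V0 →ₗ[k] Dual k V1 →ₗ[k] Dual k V2 →ₗ[k] Dual k V3 →ₗ[k] k)
    (hw : ∀ (φ0 : Dual k V0) (φ1 : Dual k V1) (φ2 : Dual k V2) (φ3 : Dual k V3),
      w φ0 φ1 φ2 φ3 =
        φ0 x0 * φ1 x1 * φ2 y2 * φ3 y3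
        - φ0 y0 * φ1 x1 * φ2 x2 * φ3 y3
        - φ0 x0 * φ1 y1 * φ2 y2 * φ3 x3
        + φ0 y0 * φ1 y1 * φ2 x2 * φ3 x3) :
    (∀ (φ0 : Dual k V0) (φ1 : Dual k V1), φ0 ≠ 0 → φ1 ≠ 0 →
      ∃ φ2 φ3, w φ0 φ1 φ2 φ3 ≠ 0) ∧
    (∀ (φ1 : Dual k V1) (φ2 : Dual k V2), φ1 ≠ 0 → φ2 ≠ 0 →
      ∃ φ0 φ3, w φ0 φ1 φ2 φ3 ≠ 0) ∧
    (∀ (φ2 : Dual k V2) (φ3 : Dual k V3), φ2 ≠ 0 → φ3 ≠ 0 →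
      ∃ φ0 φ1, w φ0 φ1 φ2 φ3 ≠ 0) ∧
    (∀ (φ3 : Dual k V3) (φ0 : Dual k V0), φ3 ≠ 0 → φ0 ≠ 0 →
      ∃ φ1 φ2, w φ0 φ1 φ2 φ3 ≠ 0) := by
  obtain ⟨b0, rfl, rfl⟩ := hb0
  obtain ⟨b1, rfl, rfl⟩ := hb1
  obtain ⟨b2, rfl, rfl⟩ := hb2
  obtain ⟨b3, rfl, rfl⟩ := hb3
  have hfactor : ∀ φ0 φ1 φ2 φ3,
      w φ0 φ1 φ2 φ3 = dualDet b0 b2 φ0 φ2 * dualDet b1 b3 φ1 φ3 := fun φ0 φ1 φ2 φ3 => by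
    rw [hw]
    unfold dualDet
    ring
  refine ⟨fun φ0 φ1 h0 h1 => ?_, fun φ1 φ2 h1 h2 => ?_, fun φ2 φ3 h2 h3 => ?_,
    fun φ3 φ0 h3 h0 => ?_⟩
  · obtain ⟨φ2, h02⟩ := exists_dualDet_ne_zero_right b0 b2 h0
    obtain ⟨φ3, h13⟩ := exists_dualDet_ne_zero_right b1 b3 h1
    exact ⟨φ2, φ3, hfactor .. ▸ mul_ne_zero h02 h13⟩
  · obtain ⟨φ0, h02⟩ := exists_dualDet_ne_zero_left b0 b2 h2
    obtain ⟨φ3, h13⟩ := exists_dualDet_ne_zero_right b1 b3 h1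
    exact ⟨φ0, φ3, hfactor .. ▸ mul_ne_zero h02 h13⟩
  · obtain ⟨φ0, h02⟩ := exists_dualDet_ne_zero_left b0 b2 h2
    obtain ⟨φ1, h13⟩ := exists_dualDet_ne_zero_left b1 b3 h3
    exact ⟨φ0, φ1, hfactor .. ▸ mul_ne_zero h02 h13⟩
  · obtain ⟨φ1, h13⟩ := exists_dualDet_ne_zero_left b1 b3 h3
    obtain ⟨φ2, h02⟩ := exists_dualDet_ne_zero_right b0 b2 h0
    exact ⟨φ1, φ2, hfactor .. ▸ mul_ne_zero h02 h13⟩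

/-- the linear quintuple tensor
`w = x_0 x_1 y_2 y_3 − y_0 x_1 x_2 y_3 − x_0 y_1 y_2 x_3 + y_0 y_1 x_2 x_3` is geometric.
The 4-tensor `w ∈ V_0 ⊗ V_1 ⊗ V_2 ⊗ V_3` is represented, via the canonical identification
for finite dimensional spaces, as a 4-linear functional on the duals; the hypothesis `hw`
expresses `w` in terms of the chosen bases `x_i, y_i` of the two-dimensional spaces `V_i`.
Geometricity: for each cyclically adjacent pair of slots and all non-zero functionals
`φ_j, φ_{j+1}`, the contraction `⟨φ_j ⊗ φ_{j+1}, w⟩` is non-zero. -/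
theorem linear_quintuple_tensor_is_geometric
    (k V0 V1 V2 V3 : Type) [Field k]
    [AddCommGroup V0] [Module k V0] [FiniteDimensional k V0]
    [AddCommGroup V1] [Module k V1] [FiniteDimensional k V1]
    [AddCommGroup V2] [Module k V2] [FiniteDimensional k V2]
    [AddCommGroup V3] [Module k V3] [FiniteDimensional k V3]
    (x0 y0 : V0) (x1 y1 : V1) (x2 y2 : V2) (x3 y3 : V3)
    (hb0 : ∃ b : Basis (Fin 2) k V0, b 0 = x0 ∧ b 1 = y0)
    (hb1 : ∃ b : Basis (Fin 2) k V1, b 0 = x1 ∧ b 1 = y1)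
    (hb2 : ∃ b : Basis (Fin 2) k V2, b 0 = x2 ∧ b 1 = y2)
    (hb3 : ∃ b : Basis (Fin 2) k V3, b 0 = x3 ∧ b 1 = y3)
    (w : Dual k V0 →ₗ[k] Dual k V1 →ₗ[k] Dual k V2 →ₗ[k] Dual k V3 →ₗ[k] k)
    (hw : ∀ (φ0 : Dual k V0) (φ1 : Dual k V1) (φ2 : Dual k V2) (φ3 : Dual k V3),
      w φ0 φ1 φ2 φ3 =
        φ0 x0 * φ1 x1 * φ2 y2 * φ3 y3
        - φ0 y0 * φ1 x1 * φ2 x2 * φ3 y3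
        - φ0 x0 * φ1 y1 * φ2 y2 * φ3 x3
        + φ0 y0 * φ1 y1 * φ2 x2 * φ3 x3) :
    (∀ (φ0 : Dual k V0) (φ1 : Dual k V1), φ0 ≠ 0 → φ1 ≠ 0 →
      ∃ φ2 φ3, w φ0 φ1 φ2 φ3 ≠ 0) ∧
    (∀ (φ1 : Dual k V1) (φ2 : Dual k V2), φ1 ≠ 0 → φ2 ≠ 0 →
      ∃ φ0 φ3, w φ0 φ1 φ2 φ3 ≠ 0) ∧
    (∀ (φ2 : Dual k V2) (φ3 : Dual k V3), φ2 ≠ 0 → φ3 ≠ 0 →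
      ∃ φ0 φ1, w φ0 φ1 φ2 φ3 ≠ 0) ∧
    (∀ (φ3 : Dual k V3) (φ0 : Dual k V0), φ3 ≠ 0 → φ0 ≠ 0 →
      ∃ φ1 φ2, w φ0 φ1 φ2 φ3 ≠ 0) :=
  linear_quintuple_tensor_is_geometric_general k V0 V1 V2 V3 x0 y0 x1 y1 x2 y2 x3 y3 hb0 hb1 hb2 hb3
    w hw
end

section
/- Let Q = (V_0, V_1, V_2, V_3, W) be a non-degenerate quintuple over a field k: each V_i is a two-dimensional vector space and W = kw is a one-dimensional subspace of V_0 ⊗ V_1 ⊗ V_2 ⊗ V_3 with w strongly non-degenerate. Write w = r_1 ⊗ v_1 + r_2 ⊗ v_2 with {v_1, v_2} a basis of V_3 and r_1, r_2 ∈ V_0 ⊗ V_1 ⊗ V_2. Then: (a) the subspace R = kr_1 + kr_2 is two-dimensional and independent of the choices of w, v_1, v_2; and (b) Q is isomorphic to the quintuple (V_0, V_1, V_2, R^*, r_1 ⊗ r_1^* + r_2 ⊗ r_2^*), so Q is determined up to isomorphism by R ⊆ V_0 ⊗ V_1 ⊗ V_2. -/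
open Module TensorProduct

/-!
Contracting `w = r₁ ⊗ v₁ + r₂ ⊗ v₂` against a functional `φ` on `V₃` gives `φ v₁ • r₁ + φ v₂ • r₂`.
Contracting against the coordinate functionals of the basis `{v₁, v₂}` recovers `r₁` and `r₂`, so
`R` is the image of `V₃^*` under contraction with `w`, which does not depend on the
decomposition. Non-degeneracy in the last slot makes this contraction injective, so `R` is
two-dimensional. Finally, the isomorphism `V₃ ≅ R^*` sending `vᵢ` to `rᵢ^*` carries `w` to
`r₁ ⊗ r₁^* + r₂ ⊗ r₂^*`.
-/

section Contraction

variable {R M N : Type*} [CommRing R] [AddCommGroup M] [Module R M] [AddCommGroup N] [Module R N]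

theorem rid_map_id_tmul_add_tmul (a b : M) (u v : N) (φ : N →ₗ[R] R) :
    TensorProduct.rid R M (TensorProduct.map LinearMap.id φ (a ⊗ₜ[R] u + b ⊗ₜ[R] v)) =
      φ u • a + φ v • b := by
  simp

theorem linearIndependent_pair_of_map_id_injective {a b : M} (e : Basis (Fin 2) R N)
    (hinj : ∀ φ : N →ₗ[R] R,
      TensorProduct.map LinearMap.id φ (a ⊗ₜ[R] e 0 + b ⊗ₜ[R] e 1) = 0 → φ = 0) :
    LinearIndependent R ![a, b] := by
  rw [LinearIndependent.pair_iff]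
  intro s t hst
  set φ : N →ₗ[R] R := s • e.coord 0 + t • e.coord 1
  have hφ0 : φ (e 0) = s := by simp [φ]
  have hφ1 : φ (e 1) = t := by simp [φ]
  have hφ : φ = 0 := hinj φ <| (TensorProduct.rid R M).injective <| by
    rw [rid_map_id_tmul_add_tmul, hφ0, hφ1, hst, map_zero]
  exact ⟨by rw [← hφ0, hφ, LinearMap.zero_apply], by rw [← hφ1, hφ, LinearMap.zero_apply]⟩

theorem span_pair_le_of_tmul_add_tmul_eq {a b a' b' : M} {u' v' : N} (e : Basis (Fin 2) R N)
    (h : a ⊗ₜ[R] e 0 + b ⊗ₜ[R] e 1 = a' ⊗ₜ[R] u' + b' ⊗ₜ[R] v') :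
    Submodule.span R {a, b} ≤ Submodule.span R {a', b'} := by
  have hcoord : ∀ i, TensorProduct.rid R M
      (TensorProduct.map LinearMap.id (e.coord i) (a ⊗ₜ[R] e 0 + b ⊗ₜ[R] e 1)) = ![a, b] i := by
    intro i
    fin_cases i <;> simp
  have hmem : ∀ i, ![a, b] i ∈ Submodule.span R {a', b'} := fun i ↦ by
    rw [← hcoord i, h, rid_map_id_tmul_add_tmul, Submodule.mem_span_pair]
    exact ⟨_, _, rfl⟩
  rw [Submodule.span_le, Set.insert_subset_iff, Set.singleton_subset_iff]
  exact ⟨hmem 0, hmem 1⟩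

theorem span_pair_eq_of_tmul_add_tmul_eq {a b a' b' : M} (e e' : Basis (Fin 2) R N)
    (h : a ⊗ₜ[R] e 0 + b ⊗ₜ[R] e 1 = a' ⊗ₜ[R] e' 0 + b' ⊗ₜ[R] e' 1) :
    Submodule.span R {a, b} = Submodule.span R {a', b'} :=
  le_antisymm (span_pair_le_of_tmul_add_tmul_eq e h) (span_pair_le_of_tmul_add_tmul_eq e' h.symm)

end Contraction

theorem nondegenerate_quintuple_determined_by_R_general
    (k V0 V1 V2 V3 : Type) [Field k]
    [AddCommGroup V0] [Module k V0]
    [AddCommGroup V1] [Module k V1]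
    [AddCommGroup V2] [Module k V2]
    [AddCommGroup V3] [Module k V3]
    (w : ((V0 ⊗[k] V1) ⊗[k] V2) ⊗[k] V3)
    -- strong non-degeneracy of w in each of the four slots
    (hnd3 : ∀ φ : V3 →ₗ[k] k,
      TensorProduct.map LinearMap.id φ w = 0 → φ = 0)
    -- the decomposition w = r1 ⊗ v1 + r2 ⊗ v2 with {v1, v2} a basis of V3
    (r1 r2 : (V0 ⊗[k] V1) ⊗[k] V2) (v1 v2 : V3)
    (hbasis : ∃ b : Basis (Fin 2) k V3, b 0 = v1 ∧ b 1 = v2)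
    (hw : w = r1 ⊗ₜ[k] v1 + r2 ⊗ₜ[k] v2) :
    -- (a) R = span{r1, r2} is 2-dimensional and independent of all choices
    finrank k (Submodule.span k {r1, r2} : Submodule k ((V0 ⊗[k] V1) ⊗[k] V2)) = 2 ∧
    (∀ (r1' r2' : (V0 ⊗[k] V1) ⊗[k] V2) (v1' v2' : V3),
      (∃ b : Basis (Fin 2) k V3, b 0 = v1' ∧ b 1 = v2') →
      w = r1' ⊗ₜ[k] v1' + r2' ⊗ₜ[k] v2' →
      Submodule.span k {r1, r2} = Submodule.span k {r1', r2'}) ∧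
    -- (b) Q ≅ (V0, V1, V2, R^*, r1 ⊗ r1^* + r2 ⊗ r2^*)
    (∀ b : Basis (Fin 2) k (Submodule.span k {r1, r2} :
        Submodule k ((V0 ⊗[k] V1) ⊗[k] V2)),
      ((b 0 : ((V0 ⊗[k] V1) ⊗[k] V2)) = r1) → ((b 1 : ((V0 ⊗[k] V1) ⊗[k] V2)) = r2) →
      ∃ g : V3 ≃ₗ[k] Dual k (Submodule.span k {r1, r2} :
          Submodule k ((V0 ⊗[k] V1) ⊗[k] V2)),
        TensorProduct.map LinearMap.id g.toLinearMap w =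
          (r1 ⊗ₜ[k] (b.coord (0 : Fin 2)) + r2 ⊗ₜ[k] (b.coord (1 : Fin 2)) :
            ((V0 ⊗[k] V1) ⊗[k] V2) ⊗[k]
              Dual k (Submodule.span k {r1, r2} :
                Submodule k ((V0 ⊗[k] V1) ⊗[k] V2)))) := by
  obtain ⟨e, rfl, rfl⟩ := hbasis
  subst hw
  refine ⟨?_, ?_, fun b _ _ ↦ ⟨e.equiv b.dualBasis (Equiv.refl _), ?_⟩⟩
  · rw [← Matrix.range_cons_cons_empty r1 r2 ![],
      finrank_span_eq_card (linearIndependent_pair_of_map_id_injective e hnd3), Fintype.card_fin]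
  · rintro r1' r2' _ _ ⟨e', rfl, rfl⟩ hw'
    exact span_pair_eq_of_tmul_add_tmul_eq e e' hw'
  · simp [Basis.equiv_apply, Basis.coe_dualBasis]

/-- a non-degenerate quintuple `Q = (V0, V1, V2, V3, k·w)` is determined by
the subspace `R ⊆ V0 ⊗ V1 ⊗ V2`.  Here each `V_i` is two-dimensional and
`w ∈ ((V0 ⊗ V1) ⊗ V2) ⊗ V3` is strongly non-degenerate (for each slot `j`, the induced
map `V_j^* → (remaining factors)` is injective; hypotheses `hnd0–hnd3`).  Given a
decomposition `w = r1 ⊗ v1 + r2 ⊗ v2` with `{v1, v2}` a basis of `V3`: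
(a) `R = span{r1, r2}` is two-dimensional and independent of the chosen decomposition;
(b) there is a linear isomorphism `g : V3 ≃ R^*` carrying `w` to the canonical tensor
`r1 ⊗ r1^* + r2 ⊗ r2^*`, i.e. `Q ≅ (V0, V1, V2, R^*, r1 ⊗ r1^* + r2 ⊗ r2^*)`. -/
theorem nondegenerate_quintuple_determined_by_R
    (k V0 V1 V2 V3 : Type) [Field k]
    [AddCommGroup V0] [Module k V0] [FiniteDimensional k V0]
    [AddCommGroup V1] [Module k V1] [FiniteDimensional k V1]
    [AddCommGroup V2] [Module k V2] [FiniteDimensional k V2]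
    [AddCommGroup V3] [Module k V3] [FiniteDimensional k V3]
    (hd0 : finrank k V0 = 2) (hd1 : finrank k V1 = 2)
    (hd2 : finrank k V2 = 2) (hd3 : finrank k V3 = 2)
    (w : ((V0 ⊗[k] V1) ⊗[k] V2) ⊗[k] V3)
    -- strong non-degeneracy of w in each of the four slots
    (hnd0 : ∀ φ : V0 →ₗ[k] k,
      TensorProduct.map (TensorProduct.map (TensorProduct.map φ LinearMap.id)
        LinearMap.id) LinearMap.id w = 0 → φ = 0)
    (hnd1 : ∀ φ : V1 →ₗ[k] k,
      TensorProduct.map (TensorProduct.map (TensorProduct.map LinearMap.id φ)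
        LinearMap.id) LinearMap.id w = 0 → φ = 0)
    (hnd2 : ∀ φ : V2 →ₗ[k] k,
      TensorProduct.map (TensorProduct.map LinearMap.id φ) LinearMap.id w = 0 → φ = 0)
    (hnd3 : ∀ φ : V3 →ₗ[k] k,
      TensorProduct.map LinearMap.id φ w = 0 → φ = 0)
    -- the decomposition w = r1 ⊗ v1 + r2 ⊗ v2 with {v1, v2} a basis of V3
    (r1 r2 : (V0 ⊗[k] V1) ⊗[k] V2) (v1 v2 : V3)
    (hbasis : ∃ b : Basis (Fin 2) k V3, b 0 = v1 ∧ b 1 = v2)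
    (hw : w = r1 ⊗ₜ[k] v1 + r2 ⊗ₜ[k] v2) :
    -- (a) R = span{r1, r2} is 2-dimensional and independent of all choices
    finrank k (Submodule.span k {r1, r2} : Submodule k ((V0 ⊗[k] V1) ⊗[k] V2)) = 2 ∧
    (∀ (r1' r2' : (V0 ⊗[k] V1) ⊗[k] V2) (v1' v2' : V3),
      (∃ b : Basis (Fin 2) k V3, b 0 = v1' ∧ b 1 = v2') →
      w = r1' ⊗ₜ[k] v1' + r2' ⊗ₜ[k] v2' →
      Submodule.span k {r1, r2} = Submodule.span k {r1', r2'}) ∧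
    -- (b) Q ≅ (V0, V1, V2, R^*, r1 ⊗ r1^* + r2 ⊗ r2^*)
    (∀ b : Basis (Fin 2) k (Submodule.span k {r1, r2} :
        Submodule k ((V0 ⊗[k] V1) ⊗[k] V2)),
      ((b 0 : ((V0 ⊗[k] V1) ⊗[k] V2)) = r1) → ((b 1 : ((V0 ⊗[k] V1) ⊗[k] V2)) = r2) →
      ∃ g : V3 ≃ₗ[k] Dual k (Submodule.span k {r1, r2} :
          Submodule k ((V0 ⊗[k] V1) ⊗[k] V2)),
        TensorProduct.map LinearMap.id g.toLinearMap w =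
          (r1 ⊗ₜ[k] (b.coord (0 : Fin 2)) + r2 ⊗ₜ[k] (b.coord (1 : Fin 2)) :
            ((V0 ⊗[k] V1) ⊗[k] V2) ⊗[k]
              Dual k (Submodule.span k {r1, r2} :
                Submodule k ((V0 ⊗[k] V1) ⊗[k] V2)))) :=
  nondegenerate_quintuple_determined_by_R_general k V0 V1 V2 V3 w hnd3 r1 r2 v1 v2 hbasis hw
end

section
/- Let B be a Z-graded k-algebra and τ = (τ_g)_{g∈Z} a Zhang system on B, i.e. degree-preserving k-linear bijections τ_g : B → B satisfying τ_g(a τ_h(b)) = τ_g(a) τ_{g+h}(b) for homogeneous a ∈ B_h and b ∈ B. Let B_τ denote the Zhang twist: the same graded vector space with multiplication a · b = a τ_g(b) for a ∈ B_g. Then B_τ is an associative Z-graded algebra and the associated Z-algebras are isomorphic: B̌ ≅ (B_τ)̌, where B̌_{ij} = B_{j-i} with multiplication induced from B. -/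
/-! The isomorphism `B̌ ≅ (B_τ)̌` is `τ_i⁻¹` on `B̌_{ij} = B_{j-i}`. Applying `τ_i` to the required
identity `τ_i⁻¹(a b) = τ_i⁻¹(a) τ_{j-i}(τ_j⁻¹ b)` and using the Zhang relation with `g = i`,
`h = j - i` turns its right side into `a τ_{i+(j-i)}(τ_j⁻¹ b) = a b`. The only other point is that
`τ_i⁻¹` preserves degrees, because an injective degree-preserving map commutes with the
projections onto the graded pieces. -/

section Decomposition

variable {ι M σ F : Type*} [DecidableEq ι] [AddCommMonoid M] [SetLike σ M]
  [AddSubmonoidClass σ M] (𝒜 : ι → σ) [DirectSum.Decomposition 𝒜]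
  [FunLike F M M] [AddMonoidHomClass F M M]

theorem map_directSumDecompose_of_map_mem {f : F} (hf : ∀ i x, x ∈ 𝒜 i → f x ∈ 𝒜 i)
    (x : M) (i : ι) :
    f (DirectSum.decompose 𝒜 x i) = DirectSum.decompose 𝒜 (f x) i := by
  induction x using DirectSum.Decomposition.inductionOn 𝒜 with
  | zero => simp
  | @homogeneous j m =>
    by_cases hji : j = i
    · subst hji
      rw [DirectSum.decompose_of_mem_same 𝒜 m.2,
        DirectSum.decompose_of_mem_same 𝒜 (hf j m m.2)]
    · rw [DirectSum.decompose_of_mem_ne 𝒜 m.2 hji,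
        DirectSum.decompose_of_mem_ne 𝒜 (hf j m m.2) hji, map_zero]
  | add x y hx hy => simp only [map_add, DirectSum.decompose_add, DirectSum.add_apply,
      AddMemClass.coe_add, hx, hy]

theorem mem_of_map_mem_of_injective {f : F} (hf : ∀ i x, x ∈ 𝒜 i → f x ∈ 𝒜 i)
    (hinj : Function.Injective f) {i : ι} {x : M} (hx : f x ∈ 𝒜 i) : x ∈ 𝒜 i := by
  have hproj : (DirectSum.decompose 𝒜 x i : M) = x := hinj <| by
    rw [map_directSumDecompose_of_map_mem 𝒜 hf, DirectSum.decompose_of_mem_same 𝒜 hx]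
  exact hproj ▸ (DirectSum.decompose 𝒜 x i).2

end Decomposition

theorem Submodule.map_linearEquiv_eq_self_of_map_mem {ι R M : Type*} [DecidableEq ι]
    [Semiring R] [AddCommMonoid M] [Module R M] (𝒜 : ι → Submodule R M)
    [DirectSum.Decomposition 𝒜] (e : M ≃ₗ[R] M) (he : ∀ i x, x ∈ 𝒜 i → e x ∈ 𝒜 i) (i : ι) :
    (𝒜 i).map (e : M →ₗ[R] M) = 𝒜 i := by
  refine le_antisymm (Submodule.map_le_iff_le_comap.mpr fun x hx => he i x hx) fun x hx => ?_
  refine ⟨e.symm x, mem_of_map_mem_of_injective 𝒜 he e.injective ?_, e.apply_symm_apply x⟩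
  rwa [e.apply_symm_apply]

/-- Zhang twists have the same associated ℤ-algebra.  `B` is a ℤ-graded
`k`-algebra with grading `𝒜 : ℤ → Submodule k B`, and `τ = (τ_g)_{g ∈ ℤ}` is a Zhang
system: degree-preserving `k`-linear bijections with `τ_g(a · τ_h(b)) = τ_g(a) · τ_{g+h}(b)`
for homogeneous `a ∈ B_h`.  The Zhang twist `B_τ` has twisted product `a ⋆ b = a · τ_g(b)`
for `a ∈ B_g`.  Claim: (1) the twisted product is associative on homogeneous elements
(so `B_τ` is an associative ℤ-graded algebra), and (2) the associated ℤ-algebras agree: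
there are `k`-linear bijections `ψ_{ij} : B̌_{ij} = 𝒜_{j-i} → 𝒜_{j-i} = (B_τ)̌_{ij}`
carrying the product of `B̌` to the twisted product of `(B_τ)̌`. -/
theorem zhang_twist_has_isomorphic_Z_algebra
    (k : Type) [CommRing k] (B : Type) [Ring B] [Algebra k B]
    (𝒜 : ℤ → Submodule k B) [GradedRing 𝒜]
    (τ : ℤ → (B ≃ₗ[k] B))
    (hτdeg : ∀ (g n : ℤ) (b : B), b ∈ 𝒜 n → τ g b ∈ 𝒜 n)
    (hZhang : ∀ (g h : ℤ) (a : B), a ∈ 𝒜 h → ∀ b : B,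
      τ g (a * τ h b) = τ g a * τ (g + h) b) :
    -- (1) the twisted multiplication a ⋆ b = a * τ_g b is associative on homogeneous a, b
    (∀ (g h : ℤ) (a b c : B), a ∈ 𝒜 g → b ∈ 𝒜 h →
      (a * τ g b) * τ (g + h) c = a * τ g (b * τ h c)) ∧
    -- (2) the associated ℤ-algebras B̌ and (B_τ)̌ are isomorphic
    (∃ ψ : ∀ i j : ℤ, (𝒜 (j - i)) ≃ₗ[k] (𝒜 (j - i)),
      ∀ (i j l : ℤ) (a : 𝒜 (j - i)) (b : 𝒜 (l - j)),
        -- ψ applied to the untwisted product a·b equals the twisted product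
        -- ψ(a) ⋆ ψ(b) = ψ(a) * τ_{j-i}(ψ(b))
        ((ψ i l ⟨(a : B) * (b : B),
            (show (j - i) + (l - j) = l - i by ring) ▸
              SetLike.mul_mem_graded a.2 b.2⟩ : B)) =
          ((ψ i j a : B) * τ (j - i) (ψ j l b : B))) := by
  refine ⟨fun g h a b c _ hb => by rw [hZhang g h b hb c, mul_assoc], ?_⟩
  refine ⟨fun i j => ((τ i).ofSubmodules _ _
    (Submodule.map_linearEquiv_eq_self_of_map_mem 𝒜 (τ i) (hτdeg i) (j - i))).symm, ?_⟩
  intro i j l a b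
  simp only [LinearEquiv.ofSubmodules_symm_apply]
  have ha : (τ i).symm a ∈ 𝒜 (j - i) :=
    mem_of_map_mem_of_injective 𝒜 (hτdeg i) (τ i).injective
      (by rw [LinearEquiv.apply_symm_apply]; exact a.2)
  apply (τ i).injective
  rw [hZhang i (j - i) _ ha, add_sub_cancel, LinearEquiv.apply_symm_apply,
    LinearEquiv.apply_symm_apply, LinearEquiv.apply_symm_apply]
end
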